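/- arXiv:1911.05710 — 2 statements merged into one kernel-verified Lean document; each statement's English description precedes it below -/
import Mathlib

section
/- Let S be a finite connected pruned graph. Then μ1(S) > 1 if and only if χ(S) < 0. -/
open scoped Classical

structure Multigraph : Type 1 where
  V : Type
  E : Type
  fintypeV : Fintype V
  fintypeE : Fintype E
  head : E → V
  tail : E → V
  inv : E → E
  inv_inv : ∀ e, inv (inv e) = e
  tail_inv : ∀ e, tail (inv e) = head e

attribute [instance] Multigraph.fintypeV Multigraph.fintypeE

namespace Multigraph

noncomputable instance (G : Multigraph) : DecidableEq G.V := Classical.decEq _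
noncomputable instance (G : Multigraph) : DecidableEq G.E := Classical.decEq _

/-- The relation identifying a directed edge with its reversal; undirected
edges are the orbits of the involution, i.e. the classes of (the equivalence
closure of) this relation. -/
def edgeRel (G : Multigraph) (e f : G.E) : Prop := f = e ∨ f = G.inv e

/-- The number of undirected edges, `#E_G`. -/
noncomputable def edgeCard (G : Multigraph) : ℕ := Nat.card (Quot G.edgeRel)

/-- The order `ord(G) = #E_G - #V_G`. -/
noncomputable def ord (G : Multigraph) : ℤ :=
  (G.edgeCard : ℤ) - (Nat.card G.V : ℤ)

/-- The Euler characteristic `χ(G) = #V_G - #Edir_G / 2`. -/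
noncomputable def eulerChar (G : Multigraph) : ℚ :=
  (Nat.card G.V : ℚ) - (Nat.card G.E : ℚ) / 2

/-- The Hashimoto (non-backtracking) matrix. -/
noncomputable def hashimoto (G : Multigraph) : Matrix G.E G.E ℂ :=
  fun e f => if G.head e = G.tail f ∧ G.inv e ≠ f then 1 else 0

/-- `μ₁(G)`: the spectral radius of the Hashimoto matrix. -/
noncomputable def mu1 (G : Multigraph) : ℝ :=
  sSup {x : ℝ | ∃ z ∈ spectrum ℂ G.hashimoto, x = ‖z‖}

def Adj (G : Multigraph) (v w : G.V) : Prop :=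
  ∃ e : G.E, G.tail e = v ∧ G.head e = w

/-- `G` is connected: nonempty, and any two vertices are joined by a walk. -/
def Connected (G : Multigraph) : Prop :=
  Nonempty G.V ∧ ∀ v w : G.V, Relation.ReflTransGen G.Adj v w

/-- The degree of a vertex: the number of directed edges with head `v`. -/
noncomputable def degree (G : Multigraph) (v : G.V) : ℕ :=
  Nat.card {e : G.E // G.head e = v}

/-- A graph is pruned if every vertex has degree at least 2. -/
def Pruned (G : Multigraph) : Prop := ∀ v : G.V, 2 ≤ G.degree v

/-- A subgraph: subsets of vertices and directed edges, closed under the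
involution and containing the endpoints of its directed edges. -/
structure Subgraph (G : Multigraph) where
  verts : Set G.V
  edges : Set G.E
  inv_mem : ∀ e ∈ edges, G.inv e ∈ edges
  head_mem : ∀ e ∈ edges, G.head e ∈ verts
  tail_mem : ∀ e ∈ edges, G.tail e ∈ verts

/-- The multigraph underlying a subgraph. -/
noncomputable def Subgraph.graph {G : Multigraph} (S : G.Subgraph) : Multigraph where
  V := {v : G.V // v ∈ S.verts}
  E := {e : G.E // e ∈ S.edges}
  fintypeV := Fintype.ofFinite _
  fintypeE := Fintype.ofFinite _
  head := fun e => ⟨G.head e.1, S.head_mem e.1 e.2⟩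
  tail := fun e => ⟨G.tail e.1, S.tail_mem e.1 e.2⟩
  inv := fun e => ⟨G.inv e.1, S.inv_mem e.1 e.2⟩
  inv_inv := fun e => Subtype.ext (G.inv_inv e.1)
  tail_inv := fun e => Subtype.ext (G.tail_inv e.1)

/-- A subgraph is proper if it is not the whole graph. -/
def Subgraph.Proper {G : Multigraph} (S : G.Subgraph) : Prop :=
  S.verts ≠ Set.univ ∨ S.edges ≠ Set.univ

/-- Isomorphism of multigraphs. -/
structure Iso (G H : Multigraph) where
  vEquiv : G.V ≃ H.V
  eEquiv : G.E ≃ H.E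
  map_head : ∀ e, H.head (eEquiv e) = vEquiv (G.head e)
  map_tail : ∀ e, H.tail (eEquiv e) = vEquiv (G.tail e)
  map_inv : ∀ e, H.inv (eEquiv e) = eEquiv (G.inv e)

end Multigraph

/-- A `(≥ν,<r)`-tangle: a connected graph `ψ` with `μ₁(ψ) ≥ ν` and `ord(ψ) < r`. -/
def IsTangle (ν : ℝ) (r : ℤ) (ψ : Multigraph) : Prop :=
  ψ.Connected ∧ ν ≤ ψ.mu1 ∧ ψ.ord < r

/-- A minimal `(≥ν,<r)`-tangle: no proper subgraph is a `(≥ν,<r)`-tangle. -/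
def IsMinimalTangle (ν : ℝ) (r : ℤ) (ψ : Multigraph) : Prop :=
  IsTangle ν r ψ ∧ ∀ S : ψ.Subgraph, S.Proper → ¬ IsTangle ν r S.graph

/-!
By the handshake lemma, a pruned graph has `χ < 0` exactly when some vertex has degree at
least 3. If every degree is 2, each directed edge has exactly one non-backtracking successor,
so the Hashimoto matrix is a permutation matrix and its eigenvalues are roots of unity.
Otherwise, with `J` the permutation matrix of the reversal `ι` and `T` the tail incidence
matrix, `H = -J (1 - T Tᵀ)` and `Tᵀ T = diag (deg v)`, so `|det H| = ∏ (deg v - 1) > 1`,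
and since `|det H|` is the product of the moduli of the eigenvalues, one of them exceeds 1.
-/

open Finset Matrix

namespace Matrix

variable {n : Type*} [Fintype n] [DecidableEq n]

theorem norm_det_le_pow_card (A : Matrix n n ℂ) {r : ℝ} (h : ∀ z ∈ spectrum ℂ A, ‖z‖ ≤ r) :
    ‖A.det‖ ≤ r ^ Fintype.card n := by
  rw [det_eq_prod_roots_charpoly, ← A.charpoly_natDegree_eq_dim,
    ← IsAlgClosed.card_roots_eq_natDegree]
  exact (map_multiset_prod (normHom : ℂ →*₀ ℝ) _).trans_le <|
    Multiset.prod_map_le_pow_card (fun z _ => norm_nonneg z)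
      fun z hz => h z (mem_spectrum_iff_isRoot_charpoly.mpr (Polynomial.isRoot_of_mem_roots hz))

theorem norm_eq_one_of_mem_spectrum_permMatrix (σ : Equiv.Perm n) {z : ℂ}
    (hz : z ∈ spectrum ℂ (σ.permMatrix ℂ)) : ‖z‖ = 1 := by
  have : Nontrivial (Matrix n n ℂ) := by
    by_contra h
    rw [not_nontrivial_iff_subsingleton] at h
    simp [spectrum.of_subsingleton] at hz
  have hpow : σ.permMatrix ℂ ^ orderOf σ = 1 := by
    have : σ.permMatrix ℂ = (permMatrixHom : _ →* Matrix n n ℂ) σ⁻¹ := by simp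
    rw [this, ← map_pow, inv_pow, pow_orderOf_eq_one, inv_one, map_one]
  have hz' := spectrum.pow_mem_pow _ (orderOf σ) hz
  rw [hpow, spectrum.one_eq, Set.mem_singleton_iff] at hz'
  exact Complex.norm_eq_one_of_pow_eq_one hz' (orderOf_pos σ).ne'

end Matrix

namespace Multigraph

variable (G : Multigraph)

theorem head_inv (e : G.E) : G.head (G.inv e) = G.tail e := by
  rw [← G.tail_inv, G.inv_inv]

theorem degree_eq_card_filter_head (v : G.V) : G.degree v = #{e | G.head e = v} := by
  rw [degree, Nat.card_eq_fintype_card, Fintype.card_subtype]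

theorem card_filter_tail (v : G.V) : #{e | G.tail e = v} = G.degree v := by
  rw [degree_eq_card_filter_head]
  refine card_bij' (fun e _ => G.inv e) (fun e _ => G.inv e) ?_ ?_ (fun e _ => G.inv_inv e)
    (fun e _ => G.inv_inv e) <;> simp [head_inv, tail_inv]

theorem sum_degree : ∑ v, G.degree v = Fintype.card G.E := by
  simp_rw [degree_eq_card_filter_head, ← card_univ]
  exact (card_eq_sum_card_fiberwise fun e _ => mem_univ (G.head e)).symm

theorem eulerChar_neg_iff : G.eulerChar < 0 ↔ 2 * Fintype.card G.V < ∑ v, G.degree v := by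
  rw [sum_degree, eulerChar, Nat.card_eq_fintype_card, Nat.card_eq_fintype_card, sub_neg,
    lt_div_iff₀ two_pos, mul_comm]
  exact_mod_cast Iff.rfl

theorem eulerChar_neg_iff_exists_three_le_degree (hG : G.Pruned) :
    G.eulerChar < 0 ↔ ∃ v, 3 ≤ G.degree v := by
  rw [eulerChar_neg_iff, mul_comm, ← smul_eq_mul, ← card_univ, ← sum_const]
  constructor
  · intro h
    obtain ⟨v, -, hv⟩ := exists_lt_of_sum_lt h
    exact ⟨v, hv⟩
  · rintro ⟨v, hv⟩
    exact sum_lt_sum (fun v _ => hG v) ⟨v, mem_univ v, hv⟩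

noncomputable def reversal : Equiv.Perm G.E := Function.Involutive.toPerm G.inv G.inv_inv

theorem reversal_apply (e : G.E) : G.reversal e = G.inv e := rfl

noncomputable def tailMatrix : Matrix G.E G.V ℂ :=
  Matrix.of fun e v => if G.tail e = v then 1 else 0

theorem tailMatrix_transpose_mul_self :
    G.tailMatrixᵀ * G.tailMatrix = diagonal fun v => (G.degree v : ℂ) := by
  ext v w
  by_cases hvw : v = w
  · subst hvw
    simp +contextual [tailMatrix, mul_apply, Finset.sum_boole, card_filter_tail]
  · simp +contextual [tailMatrix, mul_apply, hvw, Ne.symm hvw]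

theorem hashimoto_eq :
    G.hashimoto = -G.reversal.permMatrix ℂ * (1 - G.tailMatrix * G.tailMatrixᵀ) := by
  have hJ : G.reversal.permMatrix ℂ * G.tailMatrix =
      Matrix.of fun e v => if G.head e = v then 1 else 0 := by
    rw [PEquiv.toMatrix_toPEquiv_mul]
    ext e v
    simp [reversal_apply, tailMatrix, tail_inv]
  rw [neg_mul, mul_sub, mul_one, ← Matrix.mul_assoc, hJ]
  ext e f
  by_cases h : G.inv e = f
  · subst h
    simp [hashimoto, mul_apply, tailMatrix, reversal_apply, tail_inv]
  · simp [hashimoto, mul_apply, tailMatrix, reversal_apply, h]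

theorem norm_det_hashimoto : ‖G.hashimoto.det‖ = ∏ v, ‖1 - (G.degree v : ℂ)‖ := by
  rw [hashimoto_eq, det_mul, det_one_sub_mul_comm, tailMatrix_transpose_mul_self, ← diagonal_one,
    diagonal_sub, det_diagonal, norm_mul, det_neg, norm_prod]
  simp [← Int.cast_abs]

theorem one_lt_norm_det_hashimoto (hG : G.Pruned) {v : G.V} (hv : 3 ≤ G.degree v) :
    1 < ‖G.hashimoto.det‖ := by
  have hnorm : ∀ w, ‖1 - (G.degree w : ℂ)‖ = ((G.degree w - 1 : ℕ) : ℝ) := fun w => by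
    rw [norm_sub_rev, ← Nat.cast_one, ← Nat.cast_sub (one_le_two.trans (hG w)),
      Complex.norm_natCast]
  rw [norm_det_hashimoto]
  simp_rw [hnorm]
  exact_mod_cast calc 1 < G.degree v - 1 := by omega
    _ ≤ ∏ w, (G.degree w - 1) :=
      single_le_prod' (fun w _ => Nat.le_sub_of_add_le (hG w)) (mem_univ v)

theorem card_filter_nonbacktracking (e : G.E) :
    #{f | G.head e = G.tail f ∧ G.inv e ≠ f} = G.degree (G.head e) - 1 := by
  have hfilter : ({f | G.head e = G.tail f ∧ G.inv e ≠ f} : Finset G.E) =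
      ({f | G.tail f = G.head e} : Finset G.E).erase (G.inv e) := by
    ext f
    simp [eq_comm, and_comm]
  rw [hfilter, card_erase_of_mem (by simp [tail_inv]), card_filter_tail]

theorem exists_hashimoto_eq_permMatrix (hG : ∀ v, G.degree v = 2) :
    ∃ σ : Equiv.Perm G.E, G.hashimoto = σ.permMatrix ℂ := by
  have hsucc : ∀ e, ∃ f, ∀ g, (G.head e = G.tail g ∧ G.inv e ≠ g) ↔ g = f := fun e => by
    obtain ⟨f, hf⟩ := card_eq_one.mp (by rw [card_filter_nonbacktracking, hG] :
      #{g | G.head e = G.tail g ∧ G.inv e ≠ g} = 1)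
    exact ⟨f, fun g => by simpa using congrArg (g ∈ ·) hf⟩
  choose s hs using hsucc
  have hs_mem : ∀ e, G.head e = G.tail (s e) ∧ G.inv e ≠ s e := fun e => (hs e _).mpr rfl
  -- Reversing the step `e → s e` gives the step `ι (s e) → ι e`: `ι ∘ s ∘ ι` inverts `s`.
  have hs_back : ∀ e, s (G.inv (s e)) = G.inv e := fun e =>
    ((hs _ _).mp ⟨by rw [head_inv, tail_inv, (hs_mem e).1],
      by rw [G.inv_inv]; exact (hs_mem e).2.symm⟩).symm
  have hinj : Function.Injective s := fun e₁ e₂ h => by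
    have hinv : G.inv e₁ = G.inv e₂ := by rw [← hs_back, h, hs_back]
    rw [← G.inv_inv e₁, hinv, G.inv_inv]
  refine ⟨Equiv.ofBijective s (Finite.injective_iff_bijective.mp hinj), ?_⟩
  ext e f
  change (if G.head e = G.tail f ∧ G.inv e ≠ f then 1 else 0) = _
  simp only [hs e f, PEquiv.toMatrix_apply, Equiv.toPEquiv_apply, Option.mem_def,
    Option.some.injEq, Equiv.ofBijective_apply, @eq_comm _ f]

theorem norm_le_mu1 {z : ℂ} (hz : z ∈ spectrum ℂ G.hashimoto) : ‖z‖ ≤ G.mu1 :=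
  le_csSup ((G.hashimoto.finite_spectrum.image (‖·‖)).bddAbove.mono
    (by rintro _ ⟨w, hw, rfl⟩; exact ⟨w, hw, rfl⟩)) ⟨z, hz, rfl⟩

theorem one_lt_mu1_of_one_lt_norm_det (h : 1 < ‖G.hashimoto.det‖) : 1 < G.mu1 := by
  by_contra! hle
  have := G.hashimoto.norm_det_le_pow_card fun z hz => (G.norm_le_mu1 hz).trans hle
  rw [one_pow] at this
  linarith

theorem mu1_le_one_of_forall_degree_eq_two (hG : ∀ v, G.degree v = 2) : G.mu1 ≤ 1 := by
  obtain ⟨σ, hσ⟩ := G.exists_hashimoto_eq_permMatrix hG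
  refine Real.sSup_le ?_ zero_le_one
  rintro _ ⟨z, hz, rfl⟩
  rw [hσ] at hz
  exact (norm_eq_one_of_mem_spectrum_permMatrix σ hz).le

end Multigraph

theorem mu1_gt_one_iff_eulerChar_neg_general (S : Multigraph)
    (hpruned : S.Pruned) :
    1 < S.mu1 ↔ S.eulerChar < 0 := by
  rw [S.eulerChar_neg_iff_exists_three_le_degree hpruned]
  constructor
  · intro h
    by_contra! hsmall
    have hreg : ∀ v, S.degree v = 2 := fun v => by have := hpruned v; have := hsmall v; omega
    exact (S.mu1_le_one_of_forall_degree_eq_two hreg).not_gt h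
  · rintro ⟨v, hv⟩
    exact S.one_lt_mu1_of_one_lt_norm_det (S.one_lt_norm_det_hashimoto hpruned hv)

/-- For a finite connected pruned graph `S`, the spectral radius of
its Hashimoto matrix satisfies `μ₁(S) > 1` iff the Euler characteristic satisfies
`χ(S) < 0`. -/
theorem mu1_gt_one_iff_eulerChar_neg (S : Multigraph)
    (hconn : S.Connected) (hpruned : S.Pruned) :
    1 < S.mu1 ↔ S.eulerChar < 0 :=
  mu1_gt_one_iff_eulerChar_neg_general S hpruned
end

section
/- Let G be a finite connected pruned graph and let G1 be a nonempty pruned subgraph of G with G1 ≠ G. Then ord(G1) < ord(G). -/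
open scoped Classical

/-!
Counting directed edges, `2 * ord = #Edir + #(half-loops) - 2 * #V`. Going from `G₁` to `G` adds
at least as many half-loops, and each vertex outside `G₁` brings at least two directed edges
ending at it, none of them in `G₁`. Connectivity supplies one more directed edge outside `G₁`,
ending inside `G₁`. Hence `2 * (ord G - ord G₁) ≥ 1`.
-/

open Finset

theorem Relation.ReflTransGen.exists_step_of_not_of {α : Type*} {r : α → α → Prop}
    {p : α → Prop} {a b : α} (h : Relation.ReflTransGen r a b) (ha : ¬ p a) (hb : p b) :
    ∃ x y, r x y ∧ ¬ p x ∧ p y := by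
  induction h with
  | refl => exact absurd hb ha
  | @tail c d _ hcd ih =>
    by_cases hc : p c
    · exact ih hc
    · exact ⟨c, d, hcd, hc, hb⟩

namespace Multigraph

variable (G : Multigraph)

theorem edgeRel_equivalence : Equivalence G.edgeRel where
  refl _ := .inl rfl
  symm := by
    rintro e f (rfl | rfl)
    · exact .inl rfl
    · exact .inr (G.inv_inv e).symm
  trans := by
    rintro e f g hef (rfl | rfl)
    · exact hef
    · rcases hef with rfl | rfl
      · exact .inr rfl
      · exact .inl (G.inv_inv e)

theorem mk_eq_mk_iff {e f : G.E} :
    Quot.mk G.edgeRel e = Quot.mk G.edgeRel f ↔ f = e ∨ f = G.inv e :=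
  Quot.eq.trans G.edgeRel_equivalence.eqvGen_iff

theorem filter_mk_eq_mk (e : G.E) :
    ({f | Quot.mk G.edgeRel f = Quot.mk G.edgeRel e} : Finset G.E) = {e, G.inv e} := by
  ext f
  simp only [mem_filter, mem_univ, true_and, mem_insert, mem_singleton]
  rw [eq_comm, mk_eq_mk_iff]

/-- A half-loop has a single direction; counting it again as a fixed point of `G.inv` makes up
for that. -/
theorem two_mul_edgeCard :
    2 * G.edgeCard = Nat.card G.E + Nat.card {e // G.inv e = e} := by
  have := Fintype.ofFinite (Quot G.edgeRel)
  let w : G.E → ℕ := fun e => 1 + if G.inv e = e then 1 else 0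
  have hfiber : ∀ q : Quot G.edgeRel, ∑ e with Quot.mk _ e = q, w e = 2 := by
    rintro ⟨e⟩
    rw [filter_mk_eq_mk]
    by_cases he : G.inv e = e
    · simp [w, he]
    · have he' : G.inv (G.inv e) ≠ G.inv e := by rw [G.inv_inv]; exact Ne.symm he
      rw [sum_pair (Ne.symm he)]
      simp [w, he, he']
  calc 2 * G.edgeCard = ∑ q : Quot G.edgeRel, ∑ e with Quot.mk _ e = q, w e := by
        simp [hfiber, edgeCard, Nat.card_eq_fintype_card, mul_comm]
    _ = ∑ e, w e := sum_fiberwise _ _ _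
    _ = Nat.card G.E + Nat.card {e // G.inv e = e} := by
        simp [w, sum_add_distrib, Fintype.card_subtype]

theorem Pruned.two_mul_card_le {G : Multigraph} (hG : G.Pruned) (W : Finset G.V) :
    2 * #W ≤ #{e | G.head e ∈ W} := by
  calc 2 * #W ≤ ∑ v ∈ W, G.degree v := by
        rw [mul_comm]; exact card_nsmul_le_sum W _ 2 fun v _ => hG v
    _ = #{e | G.head e ∈ W} := by
        rw [card_eq_sum_card_fiberwise (s := {e | G.head e ∈ W}) (t := W) (f := G.head)
          fun e he => by simpa using he]
        refine sum_congr rfl fun v hv => ?_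
        rw [degree, Nat.card_eq_fintype_card, Fintype.card_subtype, filter_filter]
        congr 1; ext e
        simp only [mem_filter, mem_univ, true_and]
        exact ⟨fun h => ⟨h ▸ hv, h⟩, And.right⟩

namespace Subgraph

variable {G} (S : G.Subgraph)

theorem card_graph_V_add : Nat.card S.graph.V + #{v | v ∉ S.verts} = Nat.card G.V := by
  simp [graph, Nat.card_eq_fintype_card, Fintype.card_subtype, card_filter_add_card_filter_not]

theorem card_graph_E_add : Nat.card S.graph.E + #{e | e ∉ S.edges} = Nat.card G.E := by
  simp [graph, Nat.card_eq_fintype_card, Fintype.card_subtype, card_filter_add_card_filter_not]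

theorem card_fixed_graph_le :
    Nat.card {e : S.graph.E // S.graph.inv e = e} ≤ Nat.card {e : G.E // G.inv e = e} :=
  Nat.card_le_card_of_injective (fun e => ⟨e.1.1, congrArg Subtype.val e.2⟩)
    fun e f h => by
      apply Subtype.ext; apply Subtype.ext
      exact congrArg (fun x : {e : G.E // G.inv e = e} => x.1) h

/-- If some vertex lies outside `S`, a walk from it into `S` enters `S` along an edge not in `S`. -/
theorem exists_edge_notMem_head_mem (hconn : G.Connected) (hne : S.verts.Nonempty)
    (hproper : S.Proper) : ∃ e, e ∉ S.edges ∧ G.head e ∈ S.verts := by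
  by_cases hV : S.verts = Set.univ
  · obtain ⟨e, he⟩ := (Set.ne_univ_iff_exists_notMem _).1 (hproper.resolve_left (not_not.2 hV))
    exact ⟨e, he, hV ▸ Set.mem_univ _⟩
  obtain ⟨w, hw⟩ := (Set.ne_univ_iff_exists_notMem _).1 hV
  obtain ⟨v, hv⟩ := hne
  obtain ⟨x, y, ⟨e, rfl, rfl⟩, hx, hy⟩ := (hconn.2 w v).exists_step_of_not_of hw hv
  exact ⟨e, fun he => hx (S.tail_mem e he), hy⟩

theorem two_mul_card_compl_verts_lt (hconn : G.Connected) (hpruned : G.Pruned)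
    (hne : S.verts.Nonempty) (hproper : S.Proper) :
    2 * #{v | v ∉ S.verts} < #{e | e ∉ S.edges} := by
  obtain ⟨e₀, he₀, hhead⟩ := S.exists_edge_notMem_head_mem hconn hne hproper
  calc 2 * #{v | v ∉ S.verts} ≤ #{e | G.head e ∈ ({v | v ∉ S.verts} : Finset G.V)} :=
        hpruned.two_mul_card_le _
    _ < #{e | e ∉ S.edges} := by
        refine card_lt_card
          ((ssubset_iff_of_subset fun e => ?_).2 ⟨e₀, by simpa using he₀, by simpa⟩)
        simpa using mt (S.head_mem e)

end Subgraph

end Multigraph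

theorem pruned_proper_subgraph_order_lt_general (G : Multigraph)
    (hconn : G.Connected) (hpruned : G.Pruned)
    (G₁ : G.Subgraph) (hne : G₁.verts.Nonempty)
    (hproper : G₁.Proper) :
    G₁.graph.ord < G.ord := by
  have hG := G.two_mul_edgeCard
  have hG₁ := G₁.graph.two_mul_edgeCard
  have hV := G₁.card_graph_V_add
  have hE := G₁.card_graph_E_add
  have hfix := G₁.card_fixed_graph_le
  have hkey := G₁.two_mul_card_compl_verts_lt hconn hpruned hne hproper
  unfold Multigraph.ord
  omega

/-- If `G` is a finite connected pruned graph and `G₁` is a nonempty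
pruned subgraph of `G` with `G₁ ≠ G`, then `ord(G₁) < ord(G)`. -/
theorem pruned_proper_subgraph_order_lt (G : Multigraph)
    (hconn : G.Connected) (hpruned : G.Pruned)
    (G₁ : G.Subgraph) (hne : G₁.verts.Nonempty) (hp : G₁.graph.Pruned)
    (hproper : G₁.Proper) :
    G₁.graph.ord < G.ord :=
  pruned_proper_subgraph_order_lt_general G hconn hpruned G₁ hne hproper
end
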